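/- Let η > 0 and define Ψ : ℝ → ℝ by Ψ(u) = e^{−u²/2} ∫_ℝ e^{−√η u x² − (η/4) x⁴} dx. Then Ψ is twice differentiable and satisfies the Weber equation Ψ''(u) = u² Ψ(u) for all u ∈ ℝ. -/

import Mathlib

open MeasureTheory

noncomputable section

/-- `Ψ(u) = e^{−u²/2} ∫_ℝ e^{−√η u x² − (η/4) x⁴} dx`. -/
def Psi (η : ℝ) (u : ℝ) : ℝ :=
  Real.exp (-u ^ 2 / 2) * ∫ x : ℝ, Real.exp (-Real.sqrt η * u * x ^ 2 - (η / 4) * x ^ 4)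

open Real Filter

lemma pow_div_fact_le_exp {t : ℝ} (ht : 0 ≤ t) (k : ℕ) : t ^ k / k.factorial ≤ Real.exp t := by
  calc t ^ k / k.factorial ≤ ∑ i ∈ Finset.range (k+1), t ^ i / i.factorial := by
        refine Finset.single_le_sum (f := fun i => t ^ i / (i.factorial : ℝ)) ?_ (Finset.self_mem_range_succ k)
        intro i _; positivity
    _ ≤ Real.exp t := Real.sum_le_exp_of_nonneg ht _

/-- Master bound: `|x|^k e^{b x² - c x⁴} ≤ M e^{-x²}`. -/
lemma master_bound (c : ℝ) (hc : 0 < c) (b : ℝ) (k : ℕ) :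
    ∃ M : ℝ, ∀ x : ℝ, |x| ^ k * Real.exp (b * x ^ 2 - c * x ^ 4) ≤ M * Real.exp (-x ^ 2) := by
  set B : ℝ := |b| + 1 with hB
  have hB0 : 0 < B := by positivity
  refine ⟨(1 + k.factorial * (4 / c) ^ k) * Real.exp (B ^ 2 / (2 * c)), fun x => ?_⟩
  have hx4k : (x ^ 4) ^ k = x ^ (4 * k) := by ring
  have hx4knn : (0:ℝ) ≤ x ^ (4 * k) := hx4k ▸ pow_nonneg (by positivity) k
  have h1 : |x| ^ k ≤ (1 + k.factorial * (4 / c) ^ k) * Real.exp (c / 4 * x ^ 4) := by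
    have hx4 : (0:ℝ) ≤ c / 4 * x ^ 4 := by positivity
    have h2 : |x| ^ k ≤ 1 + x ^ (4 * k) := by
      rcases le_total (|x|) 1 with h | h
      · have h' : |x| ^ k ≤ 1 := pow_le_one₀ (abs_nonneg x) h
        linarith
      · have h' : |x| ^ k ≤ |x| ^ (4 * k) := pow_le_pow_right₀ h (by omega)
        have he : |x| ^ (4 * k) = x ^ (4 * k) := by
          rw [← hx4k, ← abs_pow, abs_of_nonneg (by positivity)]; ring
        rw [he] at h'; linarith
    have h3 : x ^ (4 * k) ≤ k.factorial * (4 / c) ^ k * Real.exp (c / 4 * x ^ 4) := by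
      have hd := pow_div_fact_le_exp hx4 k
      rw [div_le_iff₀ (by positivity : (0:ℝ) < (k.factorial : ℝ))] at hd
      have hexp : (c / 4) ^ k * x ^ (4 * k) ≤ Real.exp (c / 4 * x ^ 4) * k.factorial := by
        calc (c / 4) ^ k * x ^ (4 * k) = (c / 4 * x ^ 4) ^ k := by rw [mul_pow, hx4k]
          _ ≤ Real.exp (c / 4 * x ^ 4) * k.factorial := hd
      have h44 := mul_le_mul_of_nonneg_left hexp (by positivity : (0:ℝ) ≤ (4 / c) ^ k)
      have hinv : (4 / c : ℝ) ^ k * (c / 4) ^ k = 1 := by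
        rw [← mul_pow, div_mul_div_comm, mul_comm c 4, div_self (by positivity), one_pow]
      calc x ^ (4 * k) = (4 / c : ℝ) ^ k * (c / 4) ^ k * x ^ (4 * k) := by rw [hinv, one_mul]
        _ ≤ (4 / c) ^ k * (Real.exp (c / 4 * x ^ 4) * k.factorial) := by rw [mul_assoc]; exact h44
        _ = k.factorial * (4 / c) ^ k * Real.exp (c / 4 * x ^ 4) := by ring
    have hexp1 : (1:ℝ) ≤ Real.exp (c / 4 * x ^ 4) := Real.one_le_exp hx4
    calc |x| ^ k ≤ 1 + x ^ (4 * k) := h2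
      _ ≤ Real.exp (c / 4 * x ^ 4) + k.factorial * (4 / c) ^ k * Real.exp (c / 4 * x ^ 4) := by
          gcongr
      _ = (1 + k.factorial * (4 / c) ^ k) * Real.exp (c / 4 * x ^ 4) := by ring
  have h4 : c / 4 * x ^ 4 + (b * x ^ 2 - c * x ^ 4) + x ^ 2 ≤ B ^ 2 / (2 * c) := by
    have h5 : (b + 1) * x ^ 2 ≤ B * x ^ 2 := by
      have : b + 1 ≤ B := by rw [hB]; linarith [le_abs_self b]
      nlinarith [sq_nonneg x]
    have h6 : B * x ^ 2 ≤ c / 2 * x ^ 4 + B ^ 2 / (2 * c) := by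
      have key : c / 2 * x ^ 4 + B ^ 2 / (2 * c) - B * x ^ 2 = (c * x ^ 2 - B) ^ 2 / (2 * c) := by
        field_simp; ring
      nlinarith [sq_nonneg (c * x ^ 2 - B), div_nonneg (sq_nonneg (c * x ^ 2 - B)) (by positivity : (0:ℝ) ≤ 2 * c)]
    nlinarith [sq_nonneg (x ^ 2)]
  have key : |x| ^ k * Real.exp (b * x ^ 2 - c * x ^ 4) * Real.exp (x ^ 2) ≤
      (1 + k.factorial * (4 / c) ^ k) * Real.exp (B ^ 2 / (2 * c)) := by
    calc |x| ^ k * Real.exp (b * x ^ 2 - c * x ^ 4) * Real.exp (x ^ 2)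
        ≤ ((1 + k.factorial * (4 / c) ^ k) * Real.exp (c / 4 * x ^ 4)) *
          (Real.exp (b * x ^ 2 - c * x ^ 4) * Real.exp (x ^ 2)) := by
          rw [mul_assoc]
          exact mul_le_mul_of_nonneg_right h1 (by positivity)
      _ = (1 + k.factorial * (4 / c) ^ k) *
          Real.exp (c / 4 * x ^ 4 + (b * x ^ 2 - c * x ^ 4) + x ^ 2) := by
          rw [← Real.exp_add, mul_assoc, ← Real.exp_add]; congr 2; ring
      _ ≤ (1 + k.factorial * (4 / c) ^ k) * Real.exp (B ^ 2 / (2 * c)) := by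
          apply mul_le_mul_of_nonneg_left (Real.exp_le_exp.2 h4) (by positivity)
  have hrw : (1 + (k.factorial:ℝ) * (4 / c) ^ k) * Real.exp (B ^ 2 / (2 * c)) * Real.exp (-x ^ 2)
      = (1 + k.factorial * (4 / c) ^ k) * Real.exp (B ^ 2 / (2 * c)) / Real.exp (x ^ 2) := by
    rw [Real.exp_neg, ← div_eq_mul_inv]
  rw [hrw, le_div_iff₀ (Real.exp_pos _)]
  exact key


lemma integrable_exp_neg_sq' : Integrable (fun x : ℝ => Real.exp (-x ^ 2)) := by
  have := integrable_exp_neg_mul_sq (one_pos : (0:ℝ) < 1)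
  simpa using this

lemma cont_aux (c b : ℝ) (k : ℕ) : Continuous (fun x : ℝ => x ^ k * Real.exp (b * x ^ 2 - c * x ^ 4)) := by
  fun_prop

lemma integrable_pow_exp (c : ℝ) (hc : 0 < c) (b : ℝ) (k : ℕ) :
    Integrable (fun x : ℝ => x ^ k * Real.exp (b * x ^ 2 - c * x ^ 4)) := by
  obtain ⟨M, hM⟩ := master_bound c hc b k
  refine Integrable.mono' (integrable_exp_neg_sq'.const_mul M) ((cont_aux c b k).aestronglyMeasurable) ?_
  filter_upwards with x
  rw [norm_mul, norm_pow, Real.norm_eq_abs, Real.norm_eq_abs, abs_of_pos (Real.exp_pos _)]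
  exact hM x

/-- derivative in `a` of `∫ x^k e^{-a x² - c x⁴}`. -/
lemma hasDerivAt_I (c : ℝ) (hc : 0 < c) (k : ℕ) (a : ℝ) :
    HasDerivAt (fun a : ℝ => ∫ x : ℝ, x ^ k * Real.exp (-a * x ^ 2 - c * x ^ 4))
      (-∫ x : ℝ, x ^ (k + 2) * Real.exp (-a * x ^ 2 - c * x ^ 4)) a := by
  obtain ⟨M, hM⟩ := master_bound c hc (|a| + 1) (k + 2)
  have key := hasDerivAt_integral_of_dominated_loc_of_deriv_le (μ := volume)
      (F := fun a x => x ^ k * Real.exp (-a * x ^ 2 - c * x ^ 4))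
      (F' := fun a x => -(x ^ (k + 2) * Real.exp (-a * x ^ 2 - c * x ^ 4)))
      (x₀ := a) (bound := fun x => M * Real.exp (-x ^ 2)) (s := Metric.ball a 1) (Metric.ball_mem_nhds a one_pos)
      ?_ ?_ ?_ ?_ ?_ ?_
  · have h2 := key.2
    have : (∫ x : ℝ, -(x ^ (k + 2) * Real.exp (-a * x ^ 2 - c * x ^ 4)))
        = -∫ x : ℝ, x ^ (k + 2) * Real.exp (-a * x ^ 2 - c * x ^ 4) := integral_neg _
    rwa [this] at h2
  · filter_upwards with a'
    have : (fun x : ℝ => x ^ k * Real.exp (-a' * x ^ 2 - c * x ^ 4)) =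
        fun x : ℝ => x ^ k * Real.exp ((-a') * x ^ 2 - c * x ^ 4) := by norm_num
    rw [this]; exact (cont_aux c (-a') k).aestronglyMeasurable
  · have := integrable_pow_exp c hc (-a) k
    simpa using this
  · apply Continuous.aestronglyMeasurable; fun_prop
  · filter_upwards with x
    intro a' ha'
    rw [Metric.mem_ball, Real.dist_eq] at ha'
    have hle : -a' ≤ |a| + 1 := by
      have := abs_sub_abs_le_abs_sub a' a
      have h1 : |a'| ≤ |a| + 1 := by linarith [le_of_lt ha']
      linarith [neg_abs_le a', neg_le_abs a']
    rw [norm_neg, norm_mul, norm_pow, Real.norm_eq_abs, Real.norm_eq_abs,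
      abs_of_pos (Real.exp_pos _)]
    calc |x| ^ (k + 2) * Real.exp (-a' * x ^ 2 - c * x ^ 4)
        ≤ |x| ^ (k + 2) * Real.exp ((|a| + 1) * x ^ 2 - c * x ^ 4) := by
          apply mul_le_mul_of_nonneg_left _ (by positivity)
          apply Real.exp_le_exp.2
          have : -a' * x ^ 2 ≤ (|a| + 1) * x ^ 2 := by nlinarith [sq_nonneg x]
          linarith
      _ ≤ M * Real.exp (-x ^ 2) := hM x
  · exact integrable_exp_neg_sq'.const_mul M
  · filter_upwards with x
    intro a' _
    have h1 : HasDerivAt (fun a : ℝ => -a * x ^ 2 - c * x ^ 4) (-x ^ 2) a' := by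
      simpa using ((hasDerivAt_id a').neg.mul_const (x ^ 2)).sub_const (c * x ^ 4)
    have h2 := (h1.exp).const_mul (x ^ k)
    refine h2.congr_deriv ?_
    ring


lemma tendsto_exp_neg_sq_atTop : Tendsto (fun x : ℝ => Real.exp (-x ^ 2)) atTop (nhds 0) :=
  Real.tendsto_exp_atBot.comp (tendsto_neg_atBot_iff.mpr (tendsto_pow_atTop two_ne_zero))

/-- integration by parts identity: `∫ (1 - 2a x² - 4c x⁴) e^{-a x² - c x⁴} = 0`. -/
lemma ibp (c : ℝ) (hc : 0 < c) (a : ℝ) :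
    (∫ x : ℝ, Real.exp (-a * x ^ 2 - c * x ^ 4))
      - 2 * a * (∫ x : ℝ, x ^ 2 * Real.exp (-a * x ^ 2 - c * x ^ 4))
      - 4 * c * (∫ x : ℝ, x ^ 4 * Real.exp (-a * x ^ 2 - c * x ^ 4)) = 0 := by
  set g : ℝ → ℝ := fun x => Real.exp (-a * x ^ 2 - c * x ^ 4) with hg
  set f : ℝ → ℝ := fun x => x * g x with hf
  set f' : ℝ → ℝ := fun x => g x - 2 * a * (x ^ 2 * g x) - 4 * c * (x ^ 4 * g x) with hf'
  have hderiv : ∀ x : ℝ, HasDerivAt f (f' x) x := by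
    intro x
    have h1 : HasDerivAt (fun x : ℝ => -a * x ^ 2 - c * x ^ 4) (-a * (2 * x) - c * (4 * x ^ 3)) x := by
      have ha : HasDerivAt (fun x : ℝ => x ^ 2) (2 * x) x := by
        simpa using hasDerivAt_pow 2 x
      have hb : HasDerivAt (fun x : ℝ => x ^ 4) (4 * x ^ 3) x := by
        simpa using hasDerivAt_pow 4 x
      exact ((ha.const_mul (-a)).sub (hb.const_mul c))
    have h2 := ((hasDerivAt_id x).mul h1.exp)
    refine h2.congr_deriv ?_
    simp only [hf', hg, id_eq]
    ring
  have h0 : Integrable g := by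
    have := integrable_pow_exp c hc (-a) 0
    simp only [pow_zero, one_mul] at this
    refine this.congr (Filter.Eventually.of_forall fun x => ?_)
    simp [hg]
  have hint : Integrable f' := by
    have h2 : Integrable (fun x : ℝ => x ^ 2 * g x) := integrable_pow_exp c hc (-a) 2
    have h4 : Integrable (fun x : ℝ => x ^ 4 * g x) := integrable_pow_exp c hc (-a) 4
    exact (h0.sub (h2.const_mul (2 * a))).sub (h4.const_mul (4 * c))
  obtain ⟨M, hM⟩ := master_bound c hc (-a) 1
  have htend : ∀ l ∈ ({atTop, atBot} : Set (Filter ℝ)), True := fun _ _ => trivial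
  have hnorm : ∀ x : ℝ, ‖f x‖ ≤ M * Real.exp (-x ^ 2) := by
    intro x
    have := hM x
    simpa [hf, hg, abs_mul, abs_of_pos (Real.exp_pos _)] using this
  have hMtend : Tendsto (fun x : ℝ => M * Real.exp (-x ^ 2)) atTop (nhds 0) := by
    simpa using tendsto_exp_neg_sq_atTop.const_mul M
  have hMtendBot : Tendsto (fun x : ℝ => M * Real.exp (-x ^ 2)) atBot (nhds 0) := by
    have : Tendsto (fun x : ℝ => Real.exp (-x ^ 2)) atBot (nhds 0) :=
      by
        have hsq : Tendsto (fun x : ℝ => x ^ 2) atBot atTop := by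
          have h := (tendsto_pow_atTop (n := 2) two_ne_zero).comp
            (tendsto_neg_atBot_atTop (G := ℝ))
          exact h.congr fun x => by simp [Function.comp]
        exact Real.tendsto_exp_atBot.comp (tendsto_neg_atBot_iff.mpr hsq)
    simpa using this.const_mul M
  have htop : Tendsto f atTop (nhds 0) := squeeze_zero_norm hnorm hMtend
  have hbot : Tendsto f atBot (nhds 0) := squeeze_zero_norm hnorm hMtendBot
  have key : ∫ x, f' x = 0 - 0 := integral_of_hasDerivAt_of_tendsto hderiv hint hbot htop
  have h2 : Integrable (fun x : ℝ => x ^ 2 * g x) := integrable_pow_exp c hc (-a) 2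
  have h4 : Integrable (fun x : ℝ => x ^ 4 * g x) := integrable_pow_exp c hc (-a) 4
  rw [sub_zero] at key
  simp only [hf'] at key
  have hA : Integrable (fun x : ℝ => g x - 2 * a * (x ^ 2 * g x)) := h0.sub (h2.const_mul (2 * a))
  have hB : Integrable (fun x : ℝ => 4 * c * (x ^ 4 * g x)) := h4.const_mul (4 * c)
  have hC : Integrable (fun x : ℝ => 2 * a * (x ^ 2 * g x)) := h2.const_mul (2 * a)
  rw [integral_sub hA hB, integral_sub h0 hC, MeasureTheory.integral_const_mul, MeasureTheory.integral_const_mul] at key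
  simpa [hg] using key


def II (c : ℝ) (k : ℕ) (a : ℝ) : ℝ := ∫ x : ℝ, x ^ k * Real.exp (-a * x ^ 2 - c * x ^ 4)


lemma II_zero (c a : ℝ) : II c 0 a = ∫ x : ℝ, Real.exp (-a * x ^ 2 - c * x ^ 4) := by
  unfold II; norm_num

lemma ibp' (c : ℝ) (hc : 0 < c) (a : ℝ) :
    II c 0 a - 2 * a * II c 2 a - 4 * c * II c 4 a = 0 := by
  rw [II_zero]; exact ibp c hc a

lemma hasDerivAt_II (c : ℝ) (hc : 0 < c) (k : ℕ) (a : ℝ) :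
    HasDerivAt (fun a : ℝ => II c k a) (-(II c (k + 2) a)) a := hasDerivAt_I c hc k a

lemma psi_eq (η u : ℝ) : Psi η u = Real.exp (-u ^ 2 / 2) * II (η / 4) 0 (Real.sqrt η * u) := by
  rw [Psi, II_zero]
  congr 1
  apply congrArg
  funext x
  ring_nf

/-- for `η > 0`, the function
`Ψ(u) = e^{−u²/2} ∫_ℝ e^{−√η u x² − (η/4) x⁴} dx` is twice differentiable and
satisfies the Weber equation `Ψ'' = u² Ψ`. -/
theorem weber_equation (η : ℝ) (hη : 0 < η) :
    Differentiable ℝ (Psi η) ∧ Differentiable ℝ (deriv (Psi η)) ∧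
      ∀ u : ℝ, deriv (deriv (Psi η)) u = u ^ 2 * Psi η u := by
  set s : ℝ := Real.sqrt η with hs
  set c : ℝ := η / 4 with hcdef
  have hc : 0 < c := by positivity
  have hs2 : s ^ 2 = 4 * c := by rw [hs, hcdef, Real.sq_sqrt hη.le]; ring
  have hPsi : Psi η = fun u => Real.exp (-u ^ 2 / 2) * II c 0 (s * u) :=
    funext fun u => psi_eq η u
  -- exponential factor derivative
  have hE : ∀ u : ℝ, HasDerivAt (fun u : ℝ => Real.exp (-u ^ 2 / 2))
      (-u * Real.exp (-u ^ 2 / 2)) u := by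
    intro u
    have h1 : HasDerivAt (fun u : ℝ => -u ^ 2 / 2) (-u) u := by
      have := ((hasDerivAt_pow 2 u).neg.div_const 2)
      refine this.congr_deriv ?_
      ring
    simpa [mul_comm] using h1.exp
  -- derivative of u ↦ II c k (s*u)
  have hIk : ∀ (k : ℕ) (u : ℝ), HasDerivAt (fun u : ℝ => II c k (s * u))
      (-(s * II c (k + 2) (s * u))) u := by
    intro k u
    have h1 : HasDerivAt (fun u : ℝ => s * u) s u := by
      simpa using (hasDerivAt_id u).const_mul s
    have h2 := (hasDerivAt_II c hc k (s * u)).comp u h1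
    refine h2.congr_deriv ?_
    ring
  set P1 : ℝ → ℝ := fun u => Real.exp (-u ^ 2 / 2) *
      (-u * II c 0 (s * u) - s * II c 2 (s * u)) with hP1
  set P2 : ℝ → ℝ := fun u => Real.exp (-u ^ 2 / 2) *
      ((u ^ 2 - 1) * II c 0 (s * u) + 2 * u * s * II c 2 (s * u) + s ^ 2 * II c 4 (s * u)) with hP2
  have hD1 : ∀ u : ℝ, HasDerivAt (Psi η) (P1 u) u := by
    intro u
    rw [hPsi]
    have := (hE u).mul (hIk 0 u)
    refine this.congr_deriv ?_
    rw [hP1]; ring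
  have hD2 : ∀ u : ℝ, HasDerivAt P1 (P2 u) u := by
    intro u
    have hinner : HasDerivAt (fun u : ℝ => -u * II c 0 (s * u) - s * II c 2 (s * u))
        (-(II c 0 (s * u)) - u * (-(s * II c 2 (s * u))) - s * (-(s * II c 4 (s * u)))) u := by
      have ha : HasDerivAt (fun u : ℝ => -u * II c 0 (s * u))
          (-(II c 0 (s * u)) + u * (-(-(s * II c 2 (s * u))))) u := by
        have := ((hasDerivAt_id u).neg.mul (hIk 0 u))
        refine this.congr_deriv ?_
        simp only [Pi.neg_apply, id_eq, neg_neg, neg_mul, one_mul]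
        ring
      have hb := (hIk 2 u).const_mul s
      have := ha.sub hb
      refine this.congr_deriv ?_
      ring
    have := (hE u).mul hinner
    refine this.congr_deriv ?_
    simp only [hP2]; ring
  have hderiv1 : deriv (Psi η) = P1 := funext fun u => (hD1 u).deriv
  refine ⟨fun u => (hD1 u).differentiableAt, ?_, ?_⟩
  · rw [hderiv1]; exact fun u => (hD2 u).differentiableAt
  · intro u
    rw [hderiv1, (hD2 u).deriv, psi_eq η u, hP2]
    have hR := ibp' c hc (s * u)
    have hS := hs2
    linear_combination (-(Real.exp (-u ^ 2 / 2))) * hR +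
      Real.exp (-u ^ 2 / 2) * (II c 4 (s * u)) * hS
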